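/- If X and Y are independent real random variables and X+Y has a lattice distribution with span h > 0 (i.e., h is the largest positive real such that (X+Y-a)/h is almost surely an integer for some real a), then X also has a lattice distribution whose span is an integer multiple of h (equivalently, h divides the span of X in the sense that X is supported on a coset of hℤ). -/
import Mathlib


open MeasureTheory ProbabilityTheory

/-- If `X` and `Y` are independent and `X + Y` has a lattice distribution with span `h > 0`
(i.e. `h` is the largest positive real such that `X + Y` is a.s. supported on a coset of `hℤ`),
then `X` is a.s. supported on a coset of `hℤ`. -/
theorem stmt_0 {Ω : Type*} [MeasurableSpace Ω] (P : Measure Ω) [IsProbabilityMeasure P]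
    (X Y : Ω → ℝ) (hX : Measurable X) (hY : Measurable Y)
    (hindep : IndepFun X Y P) (h : ℝ) (hh : 0 < h)
    (hlat : ∃ a : ℝ, ∀ᵐ ω ∂P, ∃ k : ℤ, X ω + Y ω = a + h * k)
    (hspan : ∀ h' : ℝ, h < h' → ¬ ∃ a : ℝ, ∀ᵐ ω ∂P, ∃ k : ℤ, X ω + Y ω = a + h' * k) :
    ∃ b : ℝ, ∀ᵐ ω ∂P, ∃ k : ℤ, X ω = b + h * k := by
  obtain ⟨a, ha⟩ := hlat
  set μ := P.map X with hμ
  set ν := P.map Y with hν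
  haveI : IsProbabilityMeasure μ := Measure.isProbabilityMeasure_map hX.aemeasurable
  haveI : IsProbabilityMeasure ν := Measure.isProbabilityMeasure_map hY.aemeasurable
  -- the lattice set in the plane
  set S : Set (ℝ × ℝ) := (fun p : ℝ × ℝ => p.1 + p.2) ⁻¹' (Set.range fun k : ℤ => a + h * k)
    with hS
  have hSmeas : MeasurableSet S :=
    (measurable_fst.add measurable_snd) ((Set.countable_range _).measurableSet)
  have hmap : P.map (fun ω => (X ω, Y ω)) = μ.prod ν :=
    (indepFun_iff_map_prod_eq_prod_map_map hX.aemeasurable hY.aemeasurable).mp hindep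
  have hprod : ∀ᵐ p ∂(μ.prod ν), p ∈ S := by
    rw [← hmap]
    refine (mem_ae_map_iff (hX.prodMk hY).aemeasurable hSmeas).mpr ?_
    filter_upwards [ha] with ω ⟨k, hk⟩
    exact ⟨k, hk.symm⟩
  have hswap : ∀ᵐ q ∂(ν.prod μ), q ∈ Prod.swap ⁻¹' S := by
    rw [← Measure.prod_swap]
    exact (mem_ae_map_iff measurable_swap.aemeasurable (measurable_swap hSmeas)).mpr hprod
  have hae : ∀ᵐ y ∂ν, ∀ᵐ x ∂μ, (x, y) ∈ S := Measure.ae_ae_of_ae_prod hswap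
  obtain ⟨y₀, hy₀⟩ := hae.exists
  refine ⟨a - y₀, ?_⟩
  have hTmeas : MeasurableSet (Set.range fun k : ℤ => (a - y₀) + h * (k : ℝ)) :=
    (Set.countable_range _).measurableSet
  have hx : ∀ᵐ x ∂μ, x ∈ Set.range fun k : ℤ => (a - y₀) + h * (k : ℝ) := by
    filter_upwards [hy₀] with x hxS
    obtain ⟨k, hk⟩ := hxS
    exact ⟨k, by simp only [] at hk ⊢; linarith⟩
  rw [hμ] at hx
  have hx' := (mem_ae_map_iff hX.aemeasurable hTmeas).mp hx
  filter_upwards [hx'] with ω hω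
  obtain ⟨k, hk⟩ := hω
  exact ⟨k, hk.symm⟩
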